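/- Let t, n, e₃ ∈ ℝ³ be an orthonormal frame with n = t∧e₃, and let a, b, Q, N ∈ ℝ³ satisfy |a|² = |b|² = W > 0, a·b = 0, N = (a∧b)/W, a·n = 0 and (Q+N)·n = 0. Then (a·t)(1 + Q·N) = −((b + Q∧a)·n)·(N·e₃). Consequently, if 1+Q·N ≠ 0, then a·t = −(N·e₃)/(1+Q·N) · ((b + Q∧a)·n). (In the geometric situation a = x_u, b = x_v at a point of the free trace on the cylinder S with frame t, n, e₃, this is the identity x_u·t = −N³(x_v+Q(x)∧x_u)·n/(1+Q(x)·N).) -/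
import Mathlib

noncomputable section

/-- The Euclidean inner product on `ℝ³`. -/
def dot3 (a b : Fin 3 → ℝ) : ℝ := a 0 * b 0 + a 1 * b 1 + a 2 * b 2

/-- The cross product on `ℝ³`. -/
def cross3 (a b : Fin 3 → ℝ) : Fin 3 → ℝ :=
  ![a 1 * b 2 - a 2 * b 1, a 2 * b 0 - a 0 * b 2, a 0 * b 1 - a 1 * b 0]

private lemma comp3 (t e₃ v : Fin 3 → ℝ) (ht : dot3 t t = 1) (he : dot3 e₃ e₃ = 1)
    (hte : dot3 t e₃ = 0) :
    v = dot3 v t • t + dot3 v (cross3 t e₃) • cross3 t e₃ + dot3 v e₃ • e₃ := by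
  simp only [dot3] at ht he hte
  funext i
  fin_cases i
  · show v 0 = (dot3 v t • t + dot3 v (cross3 t e₃) • cross3 t e₃ + dot3 v e₃ • e₃) 0
    simp only [dot3, cross3, Pi.add_apply, Pi.smul_apply, smul_eq_mul, Matrix.cons_val_zero,
      Matrix.cons_val_one, Matrix.head_cons, Matrix.cons_val_two, Matrix.tail_cons]
    linear_combination ((-1)*e₃ 2*e₃ 2*v 0 + (-1)*e₃ 1*e₃ 1*v 0 + 1*e₃ 0*e₃ 2*v 2 + 1*e₃ 0*e₃ 1*v 1) * ht + ((-1)*v 0 + 1*t 0*t 2*v 2 + 1*t 0*t 1*v 1 + 1*t 0*t 0*v 0) * he + (1*t 2*e₃ 2*v 0 + (-1)*t 2*e₃ 0*v 2 + 1*t 1*e₃ 1*v 0 + (-1)*t 1*e₃ 0*v 1 + (-1)*t 0*e₃ 2*v 2 + (-1)*t 0*e₃ 1*v 1 + (-1)*t 0*e₃ 0*v 0) * hte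
  · show v 1 = (dot3 v t • t + dot3 v (cross3 t e₃) • cross3 t e₃ + dot3 v e₃ • e₃) 1
    simp only [dot3, cross3, Pi.add_apply, Pi.smul_apply, smul_eq_mul, Matrix.cons_val_zero,
      Matrix.cons_val_one, Matrix.head_cons, Matrix.cons_val_two, Matrix.tail_cons]
    linear_combination ((-1)*e₃ 2*e₃ 2*v 1 + 1*e₃ 1*e₃ 2*v 2 + 1*e₃ 0*e₃ 1*v 0 + (-1)*e₃ 0*e₃ 0*v 1) * ht + ((-1)*v 1 + 1*t 1*t 2*v 2 + 1*t 1*t 1*v 1 + 1*t 0*t 1*v 0) * he + (1*t 2*e₃ 2*v 1 + (-1)*t 2*e₃ 1*v 2 + (-1)*t 1*e₃ 2*v 2 + (-1)*t 1*e₃ 1*v 1 + (-1)*t 1*e₃ 0*v 0 + (-1)*t 0*e₃ 1*v 0 + 1*t 0*e₃ 0*v 1) * hte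
  · show v 2 = (dot3 v t • t + dot3 v (cross3 t e₃) • cross3 t e₃ + dot3 v e₃ • e₃) 2
    simp only [dot3, cross3, Pi.add_apply, Pi.smul_apply, smul_eq_mul, Matrix.cons_val_zero,
      Matrix.cons_val_one, Matrix.head_cons, Matrix.cons_val_two, Matrix.tail_cons]
    linear_combination (1*e₃ 1*e₃ 2*v 1 + (-1)*e₃ 1*e₃ 1*v 2 + 1*e₃ 0*e₃ 2*v 0 + (-1)*e₃ 0*e₃ 0*v 2) * ht + ((-1)*v 2 + 1*t 2*t 2*v 2 + 1*t 1*t 2*v 1 + 1*t 0*t 2*v 0) * he + ((-1)*t 2*e₃ 2*v 2 + (-1)*t 2*e₃ 1*v 1 + (-1)*t 2*e₃ 0*v 0 + (-1)*t 1*e₃ 2*v 1 + 1*t 1*e₃ 1*v 2 + (-1)*t 0*e₃ 2*v 0 + 1*t 0*e₃ 0*v 2) * hte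

/-- Let `t, n, e₃` be an orthonormal frame with `n = t∧e₃`, and let
`a, b, Q, N ∈ ℝ³` satisfy `|a|² = |b|² = W > 0`, `a·b = 0`, `N = (a∧b)/W`, `a·n = 0`
and `(Q+N)·n = 0`.  Then `(a·t)(1 + Q·N) = −((b + Q∧a)·n)·(N·e₃)`; consequently if
`1 + Q·N ≠ 0` then `a·t = −(N·e₃/(1+Q·N)) · ((b + Q∧a)·n)`. -/
theorem tangential_component_identity (t n e₃ a b Q N : Fin 3 → ℝ) (W : ℝ)
    (ht : dot3 t t = 1) (he : dot3 e₃ e₃ = 1) (hte : dot3 t e₃ = 0)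
    (hn : n = cross3 t e₃) (hW : 0 < W) (ha : dot3 a a = W) (hb : dot3 b b = W)
    (hab : dot3 a b = 0) (hN : N = W⁻¹ • cross3 a b) (han : dot3 a n = 0)
    (hQN : dot3 (Q + N) n = 0) :
    dot3 a t * (1 + dot3 Q N) = -(dot3 (b + cross3 Q a) n * dot3 N e₃) ∧
    (1 + dot3 Q N ≠ 0 →
      dot3 a t = -(dot3 N e₃ / (1 + dot3 Q N)) * dot3 (b + cross3 Q a) n) := by
  have hW' : W ≠ 0 := ne_of_gt hW
  have key : dot3 a t * (1 + dot3 Q N) = -(dot3 (b + cross3 Q a) n * dot3 N e₃) := by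
    have hWW : W * W⁻¹ = 1 := mul_inv_cancel₀ hW'
    subst hn
    subst hN
    obtain ⟨A, G, hA⟩ : ∃ A G, a = A • t + G • e₃ := by
      refine ⟨dot3 a t, dot3 a e₃, ?_⟩
      have h := comp3 t e₃ a ht he hte
      rw [han] at h
      simpa using h
    subst hA
    obtain ⟨B1, B2, B3, hB⟩ : ∃ B1 B2 B3, b = B1 • t + B2 • cross3 t e₃ + B3 • e₃ :=
      ⟨_, _, _, comp3 t e₃ b ht he hte⟩
    subst hB
    obtain ⟨Q1, Q2, Q3, hQ⟩ : ∃ Q1 Q2 Q3, Q = Q1 • t + Q2 • cross3 t e₃ + Q3 • e₃ :=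
      ⟨_, _, _, comp3 t e₃ Q ht he hte⟩
    subst hQ
    simp only [dot3, cross3, Pi.add_apply, Pi.smul_apply, smul_eq_mul,
      Matrix.cons_val_zero, Matrix.cons_val_one, Matrix.head_cons, Matrix.cons_val_two,
      Matrix.tail_cons, Fin.isValue] at ht he hte ha hb hab hQN ⊢
    linear_combination (1*A + (-1)*A*B2*B2*W⁻¹ + 1*A*B2*B2*W*W⁻¹*W⁻¹ + 1*A*B1*B1*W*W⁻¹*W⁻¹ + (-1)*A*G*G*B1*B1*W⁻¹*W⁻¹ + 1*A*A*G*B1*B3*W⁻¹*W⁻¹ + 2*t 2*e₃ 2*G*G*B2*Q1*W⁻¹ + (-2)*t 2*e₃ 2*G*G*B1*Q2*W⁻¹ + 2*t 2*e₃ 2*A*G*B3*Q2*W⁻¹ + (-2)*t 2*e₃ 2*A*G*B2*Q3*W⁻¹ + (-1)*t 2*e₃ 2*e₃ 2*e₃ 2*G*G*B2*Q1*W⁻¹ + 1*t 2*e₃ 2*e₃ 2*e₃ 2*G*G*B1*Q2*W⁻¹ + (-1)*t 2*e₃ 2*e₃ 2*e₃ 2*A*G*B3*Q2*W⁻¹ +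 1*t 2*e₃ 2*e₃ 2*e₃ 2*A*G*B2*Q3*W⁻¹ + (-1)*t 2*e₃ 1*e₃ 1*e₃ 2*G*G*B2*Q1*W⁻¹ + 1*t 2*e₃ 1*e₃ 1*e₃ 2*G*G*B1*Q2*W⁻¹ + (-1)*t 2*e₃ 1*e₃ 1*e₃ 2*A*G*B3*Q2*W⁻¹ + 1*t 2*e₃ 1*e₃ 1*e₃ 2*A*G*B2*Q3*W⁻¹ + (-2)*t 2*e₃ 0*e₃ 0*e₃ 2*G*G*B2*Q1*W⁻¹ + 2*t 2*e₃ 0*e₃ 0*e₃ 2*G*G*B1*Q2*W⁻¹ + (-2)*t 2*e₃ 0*e₃ 0*e₃ 2*A*G*B3*Q2*W⁻¹ + 2*t 2*e₃ 0*e₃ 0*e₃ 2*A*G*B2*Q3*W⁻¹ + (-1)*t 2*t 2*A*B2*B2*W⁻¹ + (-1)*t 2*t 2*A*G*B2*Q1*W⁻¹ + 1*t 2*t 2*A*A*B2*Q3*W⁻¹ + 5*t 2*t 2*e₃ 2*e₃ 2*A*B2*B2*W⁻¹ + 5*t 2*t 2*e₃ 2*e₃ 2*A*G*B2*Q1*W⁻¹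 + (-5)*t 2*t 2*e₃ 2*e₃ 2*A*A*B2*Q3*W⁻¹ + (-3)*t 2*t 2*e₃ 2*e₃ 2*e₃ 2*e₃ 2*A*B2*B2*W⁻¹ + (-3)*t 2*t 2*e₃ 2*e₃ 2*e₃ 2*e₃ 2*A*G*B2*Q1*W⁻¹ + 3*t 2*t 2*e₃ 2*e₃ 2*e₃ 2*e₃ 2*A*A*B2*Q3*W⁻¹ + 2*t 2*t 2*e₃ 1*e₃ 1*A*B2*B2*W⁻¹ + 3*t 2*t 2*e₃ 1*e₃ 1*A*G*B2*Q1*W⁻¹ + (-1)*t 2*t 2*e₃ 1*e₃ 1*A*G*B1*Q2*W⁻¹ + 1*t 2*t 2*e₃ 1*e₃ 1*A*A*B3*Q2*W⁻¹ + (-3)*t 2*t 2*e₃ 1*e₃ 1*A*A*B2*Q3*W⁻¹ + (-5)*t 2*t 2*e₃ 1*e₃ 1*e₃ 2*e₃ 2*A*B2*B2*W⁻¹ + (-5)*t 2*t 2*e₃ 1*e₃ 1*e₃ 2*e₃ 2*A*G*B2*Q1*W⁻¹ + 5*t 2*t 2*e₃ 1*e₃ 1*e₃ 2*e₃ 2*A*A*B2*Q3*W⁻¹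 + (-2)*t 2*t 2*e₃ 1*e₃ 1*e₃ 1*e₃ 1*A*B2*B2*W⁻¹ + (-2)*t 2*t 2*e₃ 1*e₃ 1*e₃ 1*e₃ 1*A*G*B2*Q1*W⁻¹ + 2*t 2*t 2*e₃ 1*e₃ 1*e₃ 1*e₃ 1*A*A*B2*Q3*W⁻¹ + 1*t 2*t 2*e₃ 0*e₃ 0*A*G*B2*Q1*W⁻¹ + (-1)*t 2*t 2*e₃ 0*e₃ 0*A*G*B1*Q2*W⁻¹ + 1*t 2*t 2*e₃ 0*e₃ 0*A*A*B3*Q2*W⁻¹ + (-1)*t 2*t 2*e₃ 0*e₃ 0*A*A*B2*Q3*W⁻¹ + (-6)*t 2*t 2*e₃ 0*e₃ 0*e₃ 2*e₃ 2*A*B2*B2*W⁻¹ + (-6)*t 2*t 2*e₃ 0*e₃ 0*e₃ 2*e₃ 2*A*G*B2*Q1*W⁻¹ + 6*t 2*t 2*e₃ 0*e₃ 0*e₃ 2*e₃ 2*A*A*B2*Q3*W⁻¹ + (-2)*t 2*t 2*e₃ 0*e₃ 0*e₃ 1*e₃ 1*A*B2*B2*W⁻¹ + (-2)*t 2*t 2*e₃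 0*e₃ 0*e₃ 1*e₃ 1*A*G*B2*Q1*W⁻¹ + 2*t 2*t 2*e₃ 0*e₃ 0*e₃ 1*e₃ 1*A*A*B2*Q3*W⁻¹ + 2*t 1*e₃ 1*G*G*B2*Q1*W⁻¹ + (-2)*t 1*e₃ 1*G*G*B1*Q2*W⁻¹ + 2*t 1*e₃ 1*A*G*B3*Q2*W⁻¹ + (-2)*t 1*e₃ 1*A*G*B2*Q3*W⁻¹ + (-1)*t 1*e₃ 1*e₃ 2*e₃ 2*G*G*B2*Q1*W⁻¹ + 1*t 1*e₃ 1*e₃ 2*e₃ 2*G*G*B1*Q2*W⁻¹ + (-1)*t 1*e₃ 1*e₃ 2*e₃ 2*A*G*B3*Q2*W⁻¹ + 1*t 1*e₃ 1*e₃ 2*e₃ 2*A*G*B2*Q3*W⁻¹ + (-1)*t 1*e₃ 1*e₃ 1*e₃ 1*G*G*B2*Q1*W⁻¹ + 1*t 1*e₃ 1*e₃ 1*e₃ 1*G*G*B1*Q2*W⁻¹ + (-1)*t 1*e₃ 1*e₃ 1*e₃ 1*A*G*B3*Q2*W⁻¹ + 1*t 1*e₃ 1*e₃ 1*e₃ 1*A*G*B2*Q3*W⁻¹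 + (-2)*t 1*e₃ 0*e₃ 0*e₃ 1*G*G*B2*Q1*W⁻¹ + 2*t 1*e₃ 0*e₃ 0*e₃ 1*G*G*B1*Q2*W⁻¹ + (-2)*t 1*e₃ 0*e₃ 0*e₃ 1*A*G*B3*Q2*W⁻¹ + 2*t 1*e₃ 0*e₃ 0*e₃ 1*A*G*B2*Q3*W⁻¹ + 6*t 1*t 2*e₃ 1*e₃ 2*A*B2*B2*W⁻¹ + 4*t 1*t 2*e₃ 1*e₃ 2*A*G*B2*Q1*W⁻¹ + 2*t 1*t 2*e₃ 1*e₃ 2*A*G*B1*Q2*W⁻¹ + (-2)*t 1*t 2*e₃ 1*e₃ 2*A*A*B3*Q2*W⁻¹ + (-4)*t 1*t 2*e₃ 1*e₃ 2*A*A*B2*Q3*W⁻¹ + (-2)*t 1*t 2*e₃ 1*e₃ 2*e₃ 2*e₃ 2*A*B2*B2*W⁻¹ + (-2)*t 1*t 2*e₃ 1*e₃ 2*e₃ 2*e₃ 2*A*G*B2*Q1*W⁻¹ + 2*t 1*t 2*e₃ 1*e₃ 2*e₃ 2*e₃ 2*A*A*B2*Q3*W⁻¹ + (-2)*t 1*t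 2*e₃ 1*e₃ 1*e₃ 1*e₃ 2*A*B2*B2*W⁻¹ + (-2)*t 1*t 2*e₃ 1*e₃ 1*e₃ 1*e₃ 2*A*G*B2*Q1*W⁻¹ + 2*t 1*t 2*e₃ 1*e₃ 1*e₃ 1*e₃ 2*A*A*B2*Q3*W⁻¹ + (-8)*t 1*t 2*e₃ 0*e₃ 0*e₃ 1*e₃ 2*A*B2*B2*W⁻¹ + (-8)*t 1*t 2*e₃ 0*e₃ 0*e₃ 1*e₃ 2*A*G*B2*Q1*W⁻¹ + 8*t 1*t 2*e₃ 0*e₃ 0*e₃ 1*e₃ 2*A*A*B2*Q3*W⁻¹ + (-1)*t 1*t 1*A*B2*B2*W⁻¹ + (-1)*t 1*t 1*A*G*B2*Q1*W⁻¹ + 1*t 1*t 1*A*A*B2*Q3*W⁻¹ + 2*t 1*t 1*e₃ 2*e₃ 2*A*B2*B2*W⁻¹ + 3*t 1*t 1*e₃ 2*e₃ 2*A*G*B2*Q1*W⁻¹ + (-1)*t 1*t 1*e₃ 2*e₃ 2*A*G*B1*Q2*W⁻¹ + 1*t 1*t 1*e₃ 2*e₃ 2*A*A*B3*Q2*W⁻¹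 + (-3)*t 1*t 1*e₃ 2*e₃ 2*A*A*B2*Q3*W⁻¹ + (-2)*t 1*t 1*e₃ 2*e₃ 2*e₃ 2*e₃ 2*A*B2*B2*W⁻¹ + (-2)*t 1*t 1*e₃ 2*e₃ 2*e₃ 2*e₃ 2*A*G*B2*Q1*W⁻¹ + 2*t 1*t 1*e₃ 2*e₃ 2*e₃ 2*e₃ 2*A*A*B2*Q3*W⁻¹ + 5*t 1*t 1*e₃ 1*e₃ 1*A*B2*B2*W⁻¹ + 5*t 1*t 1*e₃ 1*e₃ 1*A*G*B2*Q1*W⁻¹ + (-5)*t 1*t 1*e₃ 1*e₃ 1*A*A*B2*Q3*W⁻¹ + (-5)*t 1*t 1*e₃ 1*e₃ 1*e₃ 2*e₃ 2*A*B2*B2*W⁻¹ + (-5)*t 1*t 1*e₃ 1*e₃ 1*e₃ 2*e₃ 2*A*G*B2*Q1*W⁻¹ + 5*t 1*t 1*e₃ 1*e₃ 1*e₃ 2*e₃ 2*A*A*B2*Q3*W⁻¹ + (-3)*t 1*t 1*e₃ 1*e₃ 1*e₃ 1*e₃ 1*A*B2*B2*W⁻¹ + (-3)*t 1*t 1*e₃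 1*e₃ 1*e₃ 1*e₃ 1*A*G*B2*Q1*W⁻¹ + 3*t 1*t 1*e₃ 1*e₃ 1*e₃ 1*e₃ 1*A*A*B2*Q3*W⁻¹ + 1*t 1*t 1*e₃ 0*e₃ 0*A*G*B2*Q1*W⁻¹ + (-1)*t 1*t 1*e₃ 0*e₃ 0*A*G*B1*Q2*W⁻¹ + 1*t 1*t 1*e₃ 0*e₃ 0*A*A*B3*Q2*W⁻¹ + (-1)*t 1*t 1*e₃ 0*e₃ 0*A*A*B2*Q3*W⁻¹ + (-2)*t 1*t 1*e₃ 0*e₃ 0*e₃ 2*e₃ 2*A*B2*B2*W⁻¹ + (-2)*t 1*t 1*e₃ 0*e₃ 0*e₃ 2*e₃ 2*A*G*B2*Q1*W⁻¹ + 2*t 1*t 1*e₃ 0*e₃ 0*e₃ 2*e₃ 2*A*A*B2*Q3*W⁻¹ + (-6)*t 1*t 1*e₃ 0*e₃ 0*e₃ 1*e₃ 1*A*B2*B2*W⁻¹ + (-6)*t 1*t 1*e₃ 0*e₃ 0*e₃ 1*e₃ 1*A*G*B2*Q1*W⁻¹ + 6*t 1*t 1*e₃ 0*e₃ 0*e₃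 1*e₃ 1*A*A*B2*Q3*W⁻¹ + 1*t 0*e₃ 0*e₃ 2*e₃ 2*G*G*B2*Q1*W⁻¹ + (-1)*t 0*e₃ 0*e₃ 2*e₃ 2*G*G*B1*Q2*W⁻¹ + 1*t 0*e₃ 0*e₃ 2*e₃ 2*A*G*B3*Q2*W⁻¹ + (-1)*t 0*e₃ 0*e₃ 2*e₃ 2*A*G*B2*Q3*W⁻¹ + 1*t 0*e₃ 0*e₃ 1*e₃ 1*G*G*B2*Q1*W⁻¹ + (-1)*t 0*e₃ 0*e₃ 1*e₃ 1*G*G*B1*Q2*W⁻¹ + 1*t 0*e₃ 0*e₃ 1*e₃ 1*A*G*B3*Q2*W⁻¹ + (-1)*t 0*e₃ 0*e₃ 1*e₃ 1*A*G*B2*Q3*W⁻¹ + (-2)*t 0*t 2*e₃ 0*e₃ 2*A*G*B2*Q1*W⁻¹ + 2*t 0*t 2*e₃ 0*e₃ 2*A*G*B1*Q2*W⁻¹ + (-2)*t 0*t 2*e₃ 0*e₃ 2*A*A*B3*Q2*W⁻¹ + 2*t 0*t 2*e₃ 0*e₃ 2*A*A*B2*Q3*W⁻¹ + 4*t 0*t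 2*e₃ 0*e₃ 2*e₃ 2*e₃ 2*A*B2*B2*W⁻¹ + 4*t 0*t 2*e₃ 0*e₃ 2*e₃ 2*e₃ 2*A*G*B2*Q1*W⁻¹ + (-4)*t 0*t 2*e₃ 0*e₃ 2*e₃ 2*e₃ 2*A*A*B2*Q3*W⁻¹ + 4*t 0*t 2*e₃ 0*e₃ 1*e₃ 1*e₃ 2*A*B2*B2*W⁻¹ + 4*t 0*t 2*e₃ 0*e₃ 1*e₃ 1*e₃ 2*A*G*B2*Q1*W⁻¹ + (-4)*t 0*t 2*e₃ 0*e₃ 1*e₃ 1*e₃ 2*A*A*B2*Q3*W⁻¹ + (-2)*t 0*t 1*e₃ 0*e₃ 1*A*G*B2*Q1*W⁻¹ + 2*t 0*t 1*e₃ 0*e₃ 1*A*G*B1*Q2*W⁻¹ + (-2)*t 0*t 1*e₃ 0*e₃ 1*A*A*B3*Q2*W⁻¹ + 2*t 0*t 1*e₃ 0*e₃ 1*A*A*B2*Q3*W⁻¹ + 4*t 0*t 1*e₃ 0*e₃ 1*e₃ 2*e₃ 2*A*B2*B2*W⁻¹ + 4*t 0*t 1*e₃ 0*e₃ 1*e₃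 2*e₃ 2*A*G*B2*Q1*W⁻¹ + (-4)*t 0*t 1*e₃ 0*e₃ 1*e₃ 2*e₃ 2*A*A*B2*Q3*W⁻¹ + 4*t 0*t 1*e₃ 0*e₃ 1*e₃ 1*e₃ 1*A*B2*B2*W⁻¹ + 4*t 0*t 1*e₃ 0*e₃ 1*e₃ 1*e₃ 1*A*G*B2*Q1*W⁻¹ + (-4)*t 0*t 1*e₃ 0*e₃ 1*e₃ 1*e₃ 1*A*A*B2*Q3*W⁻¹ + 1*t 0*t 0*e₃ 2*e₃ 2*A*G*B2*Q1*W⁻¹ + (-1)*t 0*t 0*e₃ 2*e₃ 2*A*G*B1*Q2*W⁻¹ + 1*t 0*t 0*e₃ 2*e₃ 2*A*A*B3*Q2*W⁻¹ + (-1)*t 0*t 0*e₃ 2*e₃ 2*A*A*B2*Q3*W⁻¹ + (-1)*t 0*t 0*e₃ 2*e₃ 2*e₃ 2*e₃ 2*A*B2*B2*W⁻¹ + (-1)*t 0*t 0*e₃ 2*e₃ 2*e₃ 2*e₃ 2*A*G*B2*Q1*W⁻¹ + 1*t 0*t 0*e₃ 2*e₃ 2*e₃ 2*e₃ 2*A*A*B2*Q3*W⁻¹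 + 1*t 0*t 0*e₃ 1*e₃ 1*A*G*B2*Q1*W⁻¹ + (-1)*t 0*t 0*e₃ 1*e₃ 1*A*G*B1*Q2*W⁻¹ + 1*t 0*t 0*e₃ 1*e₃ 1*A*A*B3*Q2*W⁻¹ + (-1)*t 0*t 0*e₃ 1*e₃ 1*A*A*B2*Q3*W⁻¹ + (-2)*t 0*t 0*e₃ 1*e₃ 1*e₃ 2*e₃ 2*A*B2*B2*W⁻¹ + (-2)*t 0*t 0*e₃ 1*e₃ 1*e₃ 2*e₃ 2*A*G*B2*Q1*W⁻¹ + 2*t 0*t 0*e₃ 1*e₃ 1*e₃ 2*e₃ 2*A*A*B2*Q3*W⁻¹ + (-1)*t 0*t 0*e₃ 1*e₃ 1*e₃ 1*e₃ 1*A*B2*B2*W⁻¹ + (-1)*t 0*t 0*e₃ 1*e₃ 1*e₃ 1*e₃ 1*A*G*B2*Q1*W⁻¹ + 1*t 0*t 0*e₃ 1*e₃ 1*e₃ 1*e₃ 1*A*A*B2*Q3*W⁻¹) * ht +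
      (1*A*B3*B3*W*W⁻¹*W⁻¹ + 1*A*G*G*B1*B1*W⁻¹*W⁻¹ + (-1)*A*A*G*B1*B3*W⁻¹*W⁻¹ + (-2)*t 2*e₃ 2*G*G*B2*Q1*W⁻¹ + 2*t 2*e₃ 2*G*G*B1*Q2*W⁻¹ + (-2)*t 2*e₃ 2*A*G*B3*Q2*W⁻¹ + 2*t 2*e₃ 2*A*G*B2*Q3*W⁻¹ + 1*t 2*t 2*A*B2*B2*W*W⁻¹*W⁻¹ + 1*t 2*t 2*A*G*B2*Q1*W⁻¹ + (-1)*t 2*t 2*A*G*G*B1*B1*W⁻¹*W⁻¹ + (-1)*t 2*t 2*A*A*B2*Q3*W⁻¹ + 2*t 2*t 2*A*A*G*B1*B3*W⁻¹*W⁻¹ + (-1)*t 2*t 2*A*A*A*B3*B3*W⁻¹*W⁻¹ + (-6)*t 2*t 2*e₃ 2*e₃ 2*A*B2*B2*W⁻¹ + (-6)*t 2*t 2*e₃ 2*e₃ 2*A*G*B2*Q1*W⁻¹ + 6*t 2*t 2*e₃ 2*e₃ 2*A*A*B2*Q3*W⁻¹ + (-2)*t 2*t 2*e₃ 1*e₃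 1*A*B2*B2*W⁻¹ + (-2)*t 2*t 2*e₃ 1*e₃ 1*A*G*B2*Q1*W⁻¹ + 2*t 2*t 2*e₃ 1*e₃ 1*A*A*B2*Q3*W⁻¹ + 3*t 2*t 2*t 2*e₃ 2*G*G*B2*Q1*W⁻¹ + (-3)*t 2*t 2*t 2*e₃ 2*G*G*B1*Q2*W⁻¹ + 3*t 2*t 2*t 2*e₃ 2*A*G*B3*Q2*W⁻¹ + (-3)*t 2*t 2*t 2*e₃ 2*A*G*B2*Q3*W⁻¹ + (-1)*t 2*t 2*t 2*t 2*A*B2*B2*W⁻¹ + (-1)*t 2*t 2*t 2*t 2*A*G*B2*Q1*W⁻¹ + 1*t 2*t 2*t 2*t 2*A*A*B2*Q3*W⁻¹ + 7*t 2*t 2*t 2*t 2*e₃ 2*e₃ 2*A*B2*B2*W⁻¹ + 7*t 2*t 2*t 2*t 2*e₃ 2*e₃ 2*A*G*B2*Q1*W⁻¹ + (-7)*t 2*t 2*t 2*t 2*e₃ 2*e₃ 2*A*A*B2*Q3*W⁻¹ + 1*t 2*t 2*t 2*t 2*e₃ 1*e₃ 1*A*B2*B2*W⁻¹ + 1*t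 2*t 2*t 2*t 2*e₃ 1*e₃ 1*A*G*B2*Q1*W⁻¹ + (-1)*t 2*t 2*t 2*t 2*e₃ 1*e₃ 1*A*A*B2*Q3*W⁻¹ + (-1)*t 2*t 2*t 2*t 2*e₃ 0*e₃ 0*A*B2*B2*W⁻¹ + (-1)*t 2*t 2*t 2*t 2*e₃ 0*e₃ 0*A*G*B2*Q1*W⁻¹ + 1*t 2*t 2*t 2*t 2*e₃ 0*e₃ 0*A*A*B2*Q3*W⁻¹ + (-2)*t 1*e₃ 1*G*G*B2*Q1*W⁻¹ + 2*t 1*e₃ 1*G*G*B1*Q2*W⁻¹ + (-2)*t 1*e₃ 1*A*G*B3*Q2*W⁻¹ + 2*t 1*e₃ 1*A*G*B2*Q3*W⁻¹ + (-8)*t 1*t 2*e₃ 1*e₃ 2*A*B2*B2*W⁻¹ + (-8)*t 1*t 2*e₃ 1*e₃ 2*A*G*B2*Q1*W⁻¹ + 8*t 1*t 2*e₃ 1*e₃ 2*A*A*B2*Q3*W⁻¹ + 3*t 1*t 2*t 2*e₃ 1*G*G*B2*Q1*W⁻¹ + (-3)*t 1*t 2*t 2*e₃ 1*G*G*B1*Q2*W⁻¹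 + 3*t 1*t 2*t 2*e₃ 1*A*G*B3*Q2*W⁻¹ + (-3)*t 1*t 2*t 2*e₃ 1*A*G*B2*Q3*W⁻¹ + 12*t 1*t 2*t 2*t 2*e₃ 1*e₃ 2*A*B2*B2*W⁻¹ + 12*t 1*t 2*t 2*t 2*e₃ 1*e₃ 2*A*G*B2*Q1*W⁻¹ + (-12)*t 1*t 2*t 2*t 2*e₃ 1*e₃ 2*A*A*B2*Q3*W⁻¹ + 1*t 1*t 1*A*B2*B2*W*W⁻¹*W⁻¹ + 1*t 1*t 1*A*G*B2*Q1*W⁻¹ + (-1)*t 1*t 1*A*G*G*B1*B1*W⁻¹*W⁻¹ + (-1)*t 1*t 1*A*A*B2*Q3*W⁻¹ + 2*t 1*t 1*A*A*G*B1*B3*W⁻¹*W⁻¹ + (-1)*t 1*t 1*A*A*A*B3*B3*W⁻¹*W⁻¹ + (-2)*t 1*t 1*e₃ 2*e₃ 2*A*B2*B2*W⁻¹ + (-2)*t 1*t 1*e₃ 2*e₃ 2*A*G*B2*Q1*W⁻¹ + 2*t 1*t 1*e₃ 2*e₃ 2*A*A*B2*Q3*W⁻¹ + (-6)*t 1*t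 1*e₃ 1*e₃ 1*A*B2*B2*W⁻¹ + (-6)*t 1*t 1*e₃ 1*e₃ 1*A*G*B2*Q1*W⁻¹ + 6*t 1*t 1*e₃ 1*e₃ 1*A*A*B2*Q3*W⁻¹ + 3*t 1*t 1*t 2*e₃ 2*G*G*B2*Q1*W⁻¹ + (-3)*t 1*t 1*t 2*e₃ 2*G*G*B1*Q2*W⁻¹ + 3*t 1*t 1*t 2*e₃ 2*A*G*B3*Q2*W⁻¹ + (-3)*t 1*t 1*t 2*e₃ 2*A*G*B2*Q3*W⁻¹ + (-2)*t 1*t 1*t 2*t 2*A*B2*B2*W⁻¹ + (-2)*t 1*t 1*t 2*t 2*A*G*B2*Q1*W⁻¹ + 2*t 1*t 1*t 2*t 2*A*A*B2*Q3*W⁻¹ + 8*t 1*t 1*t 2*t 2*e₃ 2*e₃ 2*A*B2*B2*W⁻¹ + 8*t 1*t 1*t 2*t 2*e₃ 2*e₃ 2*A*G*B2*Q1*W⁻¹ + (-8)*t 1*t 1*t 2*t 2*e₃ 2*e₃ 2*A*A*B2*Q3*W⁻¹ + 8*t 1*t 1*t 2*t 2*e₃ 1*e₃ 1*A*B2*B2*W⁻¹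 + 8*t 1*t 1*t 2*t 2*e₃ 1*e₃ 1*A*G*B2*Q1*W⁻¹ + (-8)*t 1*t 1*t 2*t 2*e₃ 1*e₃ 1*A*A*B2*Q3*W⁻¹ + (-2)*t 1*t 1*t 2*t 2*e₃ 0*e₃ 0*A*B2*B2*W⁻¹ + (-2)*t 1*t 1*t 2*t 2*e₃ 0*e₃ 0*A*G*B2*Q1*W⁻¹ + 2*t 1*t 1*t 2*t 2*e₃ 0*e₃ 0*A*A*B2*Q3*W⁻¹ + 3*t 1*t 1*t 1*e₃ 1*G*G*B2*Q1*W⁻¹ + (-3)*t 1*t 1*t 1*e₃ 1*G*G*B1*Q2*W⁻¹ + 3*t 1*t 1*t 1*e₃ 1*A*G*B3*Q2*W⁻¹ + (-3)*t 1*t 1*t 1*e₃ 1*A*G*B2*Q3*W⁻¹ + 12*t 1*t 1*t 1*t 2*e₃ 1*e₃ 2*A*B2*B2*W⁻¹ + 12*t 1*t 1*t 1*t 2*e₃ 1*e₃ 2*A*G*B2*Q1*W⁻¹ + (-12)*t 1*t 1*t 1*t 2*e₃ 1*e₃ 2*A*A*B2*Q3*W⁻¹ + (-1)*t 1*t 1*t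 1*t 1*A*B2*B2*W⁻¹ + (-1)*t 1*t 1*t 1*t 1*A*G*B2*Q1*W⁻¹ + 1*t 1*t 1*t 1*t 1*A*A*B2*Q3*W⁻¹ + 1*t 1*t 1*t 1*t 1*e₃ 2*e₃ 2*A*B2*B2*W⁻¹ + 1*t 1*t 1*t 1*t 1*e₃ 2*e₃ 2*A*G*B2*Q1*W⁻¹ + (-1)*t 1*t 1*t 1*t 1*e₃ 2*e₃ 2*A*A*B2*Q3*W⁻¹ + 7*t 1*t 1*t 1*t 1*e₃ 1*e₃ 1*A*B2*B2*W⁻¹ + 7*t 1*t 1*t 1*t 1*e₃ 1*e₃ 1*A*G*B2*Q1*W⁻¹ + (-7)*t 1*t 1*t 1*t 1*e₃ 1*e₃ 1*A*A*B2*Q3*W⁻¹ + (-1)*t 1*t 1*t 1*t 1*e₃ 0*e₃ 0*A*B2*B2*W⁻¹ + (-1)*t 1*t 1*t 1*t 1*e₃ 0*e₃ 0*A*G*B2*Q1*W⁻¹ + 1*t 1*t 1*t 1*t 1*e₃ 0*e₃ 0*A*A*B2*Q3*W⁻¹ + 1*t 0*t 2*t 2*e₃ 0*G*G*B2*Q1*W⁻¹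 + (-1)*t 0*t 2*t 2*e₃ 0*G*G*B1*Q2*W⁻¹ + 1*t 0*t 2*t 2*e₃ 0*A*G*B3*Q2*W⁻¹ + (-1)*t 0*t 2*t 2*e₃ 0*A*G*B2*Q3*W⁻¹ + 4*t 0*t 2*t 2*t 2*e₃ 0*e₃ 2*A*B2*B2*W⁻¹ + 4*t 0*t 2*t 2*t 2*e₃ 0*e₃ 2*A*G*B2*Q1*W⁻¹ + (-4)*t 0*t 2*t 2*t 2*e₃ 0*e₃ 2*A*A*B2*Q3*W⁻¹ + 4*t 0*t 1*t 2*t 2*e₃ 0*e₃ 1*A*B2*B2*W⁻¹ + 4*t 0*t 1*t 2*t 2*e₃ 0*e₃ 1*A*G*B2*Q1*W⁻¹ + (-4)*t 0*t 1*t 2*t 2*e₃ 0*e₃ 1*A*A*B2*Q3*W⁻¹ + 1*t 0*t 1*t 1*e₃ 0*G*G*B2*Q1*W⁻¹ + (-1)*t 0*t 1*t 1*e₃ 0*G*G*B1*Q2*W⁻¹ + 1*t 0*t 1*t 1*e₃ 0*A*G*B3*Q2*W⁻¹ + (-1)*t 0*t 1*t 1*e₃ 0*A*G*B2*Q3*W⁻¹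 + 4*t 0*t 1*t 1*t 2*e₃ 0*e₃ 2*A*B2*B2*W⁻¹ + 4*t 0*t 1*t 1*t 2*e₃ 0*e₃ 2*A*G*B2*Q1*W⁻¹ + (-4)*t 0*t 1*t 1*t 2*e₃ 0*e₃ 2*A*A*B2*Q3*W⁻¹ + 4*t 0*t 1*t 1*t 1*e₃ 0*e₃ 1*A*B2*B2*W⁻¹ + 4*t 0*t 1*t 1*t 1*e₃ 0*e₃ 1*A*G*B2*Q1*W⁻¹ + (-4)*t 0*t 1*t 1*t 1*e₃ 0*e₃ 1*A*A*B2*Q3*W⁻¹ + (-1)*t 0*t 0*A*B2*B2*W⁻¹ + 1*t 0*t 0*A*B2*B2*W*W⁻¹*W⁻¹ + (-1)*t 0*t 0*A*G*G*B1*B1*W⁻¹*W⁻¹ + 2*t 0*t 0*A*A*G*B1*B3*W⁻¹*W⁻¹ + (-1)*t 0*t 0*A*A*A*B3*B3*W⁻¹*W⁻¹ + (-1)*t 0*t 0*e₃ 2*e₃ 2*A*B2*B2*W⁻¹ + (-1)*t 0*t 0*e₃ 2*e₃ 2*A*G*B2*Q1*W⁻¹ + 1*t 0*t 0*e₃ 2*e₃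 2*A*A*B2*Q3*W⁻¹ + (-1)*t 0*t 0*e₃ 1*e₃ 1*A*B2*B2*W⁻¹ + (-1)*t 0*t 0*e₃ 1*e₃ 1*A*G*B2*Q1*W⁻¹ + 1*t 0*t 0*e₃ 1*e₃ 1*A*A*B2*Q3*W⁻¹ + 2*t 0*t 0*t 2*e₃ 2*G*G*B2*Q1*W⁻¹ + (-2)*t 0*t 0*t 2*e₃ 2*G*G*B1*Q2*W⁻¹ + 2*t 0*t 0*t 2*e₃ 2*A*G*B3*Q2*W⁻¹ + (-2)*t 0*t 0*t 2*e₃ 2*A*G*B2*Q3*W⁻¹ + (-1)*t 0*t 0*t 2*t 2*A*B2*B2*W⁻¹ + (-1)*t 0*t 0*t 2*t 2*A*G*B2*Q1*W⁻¹ + 1*t 0*t 0*t 2*t 2*A*A*B2*Q3*W⁻¹ + 4*t 0*t 0*t 2*t 2*e₃ 2*e₃ 2*A*B2*B2*W⁻¹ + 4*t 0*t 0*t 2*t 2*e₃ 2*e₃ 2*A*G*B2*Q1*W⁻¹ + (-4)*t 0*t 0*t 2*t 2*e₃ 2*e₃ 2*A*A*B2*Q3*W⁻¹ + 1*t 0*t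 0*t 2*t 2*e₃ 1*e₃ 1*A*B2*B2*W⁻¹ + 1*t 0*t 0*t 2*t 2*e₃ 1*e₃ 1*A*G*B2*Q1*W⁻¹ + (-1)*t 0*t 0*t 2*t 2*e₃ 1*e₃ 1*A*A*B2*Q3*W⁻¹ + 2*t 0*t 0*t 1*e₃ 1*G*G*B2*Q1*W⁻¹ + (-2)*t 0*t 0*t 1*e₃ 1*G*G*B1*Q2*W⁻¹ + 2*t 0*t 0*t 1*e₃ 1*A*G*B3*Q2*W⁻¹ + (-2)*t 0*t 0*t 1*e₃ 1*A*G*B2*Q3*W⁻¹ + 6*t 0*t 0*t 1*t 2*e₃ 1*e₃ 2*A*B2*B2*W⁻¹ + 6*t 0*t 0*t 1*t 2*e₃ 1*e₃ 2*A*G*B2*Q1*W⁻¹ + (-6)*t 0*t 0*t 1*t 2*e₃ 1*e₃ 2*A*A*B2*Q3*W⁻¹ + (-1)*t 0*t 0*t 1*t 1*A*B2*B2*W⁻¹ + (-1)*t 0*t 0*t 1*t 1*A*G*B2*Q1*W⁻¹ + 1*t 0*t 0*t 1*t 1*A*A*B2*Q3*W⁻¹ + 1*t 0*t 0*t 1*t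 1*e₃ 2*e₃ 2*A*B2*B2*W⁻¹ + 1*t 0*t 0*t 1*t 1*e₃ 2*e₃ 2*A*G*B2*Q1*W⁻¹ + (-1)*t 0*t 0*t 1*t 1*e₃ 2*e₃ 2*A*A*B2*Q3*W⁻¹ + 4*t 0*t 0*t 1*t 1*e₃ 1*e₃ 1*A*B2*B2*W⁻¹ + 4*t 0*t 0*t 1*t 1*e₃ 1*e₃ 1*A*G*B2*Q1*W⁻¹ + (-4)*t 0*t 0*t 1*t 1*e₃ 1*e₃ 1*A*A*B2*Q3*W⁻¹) * he +
      (1*G + 2*A*B1*B3*W*W⁻¹*W⁻¹ + (-1)*A*G*G*B1*B3*W⁻¹*W⁻¹ + 1*A*A*G*B3*B3*W⁻¹*W⁻¹ + 1*A*A*G*B1*B1*W⁻¹*W⁻¹ + (-1)*A*A*A*B1*B3*W⁻¹*W⁻¹ + 1*e₃ 2*e₃ 2*G*G*B2*Q1*W⁻¹ + (-1)*e₃ 2*e₃ 2*G*G*B1*Q2*W⁻¹ + 1*e₃ 2*e₃ 2*A*G*B3*Q2*W⁻¹ + (-1)*e₃ 2*e₃ 2*A*G*B2*Q3*W⁻¹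 + 1*e₃ 1*e₃ 1*G*G*B2*Q1*W⁻¹ + (-1)*e₃ 1*e₃ 1*G*G*B1*Q2*W⁻¹ + 1*e₃ 1*e₃ 1*A*G*B3*Q2*W⁻¹ + (-1)*e₃ 1*e₃ 1*A*G*B2*Q3*W⁻¹ + (-1)*t 2*e₃ 2*A*B2*B2*W⁻¹ + (-1)*t 2*e₃ 2*A*B2*B2*W*W⁻¹*W⁻¹ + (-2)*t 2*e₃ 2*A*G*B2*Q1*W⁻¹ + 1*t 2*e₃ 2*A*G*G*B1*B1*W⁻¹*W⁻¹ + 2*t 2*e₃ 2*A*A*B2*Q3*W⁻¹ + (-2)*t 2*e₃ 2*A*A*G*B1*B3*W⁻¹*W⁻¹ + 1*t 2*e₃ 2*A*A*A*B3*B3*W⁻¹*W⁻¹ + 3*t 2*e₃ 2*e₃ 2*e₃ 2*A*B2*B2*W⁻¹ + 3*t 2*e₃ 2*e₃ 2*e₃ 2*A*G*B2*Q1*W⁻¹ + (-3)*t 2*e₃ 2*e₃ 2*e₃ 2*A*A*B2*Q3*W⁻¹ + 3*t 2*e₃ 1*e₃ 1*e₃ 2*A*B2*B2*W⁻¹ +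 3*t 2*e₃ 1*e₃ 1*e₃ 2*A*G*B2*Q1*W⁻¹ + (-3)*t 2*e₃ 1*e₃ 1*e₃ 2*A*A*B2*Q3*W⁻¹ + 1*t 2*t 2*G*G*B2*Q1*W⁻¹ + (-1)*t 2*t 2*G*G*B1*Q2*W⁻¹ + 1*t 2*t 2*A*G*B3*Q2*W⁻¹ + (-1)*t 2*t 2*A*G*B2*Q3*W⁻¹ + (-2)*t 2*t 2*e₃ 2*e₃ 2*G*G*B2*Q1*W⁻¹ + 2*t 2*t 2*e₃ 2*e₃ 2*G*G*B1*Q2*W⁻¹ + (-2)*t 2*t 2*e₃ 2*e₃ 2*A*G*B3*Q2*W⁻¹ + 2*t 2*t 2*e₃ 2*e₃ 2*A*G*B2*Q3*W⁻¹ + (-1)*t 2*t 2*e₃ 1*e₃ 1*G*G*B2*Q1*W⁻¹ + 1*t 2*t 2*e₃ 1*e₃ 1*G*G*B1*Q2*W⁻¹ + (-1)*t 2*t 2*e₃ 1*e₃ 1*A*G*B3*Q2*W⁻¹ + 1*t 2*t 2*e₃ 1*e₃ 1*A*G*B2*Q3*W⁻¹ + 3*t 2*t 2*t 2*e₃ 2*A*B2*B2*W⁻¹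 + 3*t 2*t 2*t 2*e₃ 2*A*G*B2*Q1*W⁻¹ + (-3)*t 2*t 2*t 2*e₃ 2*A*A*B2*Q3*W⁻¹ + (-4)*t 2*t 2*t 2*e₃ 2*e₃ 2*e₃ 2*A*B2*B2*W⁻¹ + (-4)*t 2*t 2*t 2*e₃ 2*e₃ 2*e₃ 2*A*G*B2*Q1*W⁻¹ + 4*t 2*t 2*t 2*e₃ 2*e₃ 2*e₃ 2*A*A*B2*Q3*W⁻¹ + (-3)*t 2*t 2*t 2*e₃ 1*e₃ 1*e₃ 2*A*B2*B2*W⁻¹ + (-3)*t 2*t 2*t 2*e₃ 1*e₃ 1*e₃ 2*A*G*B2*Q1*W⁻¹ + 3*t 2*t 2*t 2*e₃ 1*e₃ 1*e₃ 2*A*A*B2*Q3*W⁻¹ + (-1)*t 1*e₃ 1*A*B2*B2*W⁻¹ + (-1)*t 1*e₃ 1*A*B2*B2*W*W⁻¹*W⁻¹ + (-2)*t 1*e₃ 1*A*G*B2*Q1*W⁻¹ + 1*t 1*e₃ 1*A*G*G*B1*B1*W⁻¹*W⁻¹ + 2*t 1*e₃ 1*A*A*B2*Q3*W⁻¹ +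 (-2)*t 1*e₃ 1*A*A*G*B1*B3*W⁻¹*W⁻¹ + 1*t 1*e₃ 1*A*A*A*B3*B3*W⁻¹*W⁻¹ + 3*t 1*e₃ 1*e₃ 2*e₃ 2*A*B2*B2*W⁻¹ + 3*t 1*e₃ 1*e₃ 2*e₃ 2*A*G*B2*Q1*W⁻¹ + (-3)*t 1*e₃ 1*e₃ 2*e₃ 2*A*A*B2*Q3*W⁻¹ + 3*t 1*e₃ 1*e₃ 1*e₃ 1*A*B2*B2*W⁻¹ + 3*t 1*e₃ 1*e₃ 1*e₃ 1*A*G*B2*Q1*W⁻¹ + (-3)*t 1*e₃ 1*e₃ 1*e₃ 1*A*A*B2*Q3*W⁻¹ + (-2)*t 1*t 2*e₃ 1*e₃ 2*G*G*B2*Q1*W⁻¹ + 2*t 1*t 2*e₃ 1*e₃ 2*G*G*B1*Q2*W⁻¹ + (-2)*t 1*t 2*e₃ 1*e₃ 2*A*G*B3*Q2*W⁻¹ + 2*t 1*t 2*e₃ 1*e₃ 2*A*G*B2*Q3*W⁻¹ + 3*t 1*t 2*t 2*e₃ 1*A*B2*B2*W⁻¹ + 3*t 1*t 2*t 2*e₃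 1*A*G*B2*Q1*W⁻¹ + (-3)*t 1*t 2*t 2*e₃ 1*A*A*B2*Q3*W⁻¹ + (-6)*t 1*t 2*t 2*e₃ 1*e₃ 2*e₃ 2*A*B2*B2*W⁻¹ + (-6)*t 1*t 2*t 2*e₃ 1*e₃ 2*e₃ 2*A*G*B2*Q1*W⁻¹ + 6*t 1*t 2*t 2*e₃ 1*e₃ 2*e₃ 2*A*A*B2*Q3*W⁻¹ + (-3)*t 1*t 2*t 2*e₃ 1*e₃ 1*e₃ 1*A*B2*B2*W⁻¹ + (-3)*t 1*t 2*t 2*e₃ 1*e₃ 1*e₃ 1*A*G*B2*Q1*W⁻¹ + 3*t 1*t 2*t 2*e₃ 1*e₃ 1*e₃ 1*A*A*B2*Q3*W⁻¹ + 1*t 1*t 1*G*G*B2*Q1*W⁻¹ + (-1)*t 1*t 1*G*G*B1*Q2*W⁻¹ + 1*t 1*t 1*A*G*B3*Q2*W⁻¹ + (-1)*t 1*t 1*A*G*B2*Q3*W⁻¹ + (-1)*t 1*t 1*e₃ 2*e₃ 2*G*G*B2*Q1*W⁻¹ + 1*t 1*t 1*e₃ 2*e₃ 2*G*G*B1*Q2*W⁻¹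 + (-1)*t 1*t 1*e₃ 2*e₃ 2*A*G*B3*Q2*W⁻¹ + 1*t 1*t 1*e₃ 2*e₃ 2*A*G*B2*Q3*W⁻¹ + (-2)*t 1*t 1*e₃ 1*e₃ 1*G*G*B2*Q1*W⁻¹ + 2*t 1*t 1*e₃ 1*e₃ 1*G*G*B1*Q2*W⁻¹ + (-2)*t 1*t 1*e₃ 1*e₃ 1*A*G*B3*Q2*W⁻¹ + 2*t 1*t 1*e₃ 1*e₃ 1*A*G*B2*Q3*W⁻¹ + 3*t 1*t 1*t 2*e₃ 2*A*B2*B2*W⁻¹ + 3*t 1*t 1*t 2*e₃ 2*A*G*B2*Q1*W⁻¹ + (-3)*t 1*t 1*t 2*e₃ 2*A*A*B2*Q3*W⁻¹ + (-3)*t 1*t 1*t 2*e₃ 2*e₃ 2*e₃ 2*A*B2*B2*W⁻¹ + (-3)*t 1*t 1*t 2*e₃ 2*e₃ 2*e₃ 2*A*G*B2*Q1*W⁻¹ + 3*t 1*t 1*t 2*e₃ 2*e₃ 2*e₃ 2*A*A*B2*Q3*W⁻¹ + (-6)*t 1*t 1*t 2*e₃ 1*e₃ 1*e₃ 2*A*B2*B2*W⁻¹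 + (-6)*t 1*t 1*t 2*e₃ 1*e₃ 1*e₃ 2*A*G*B2*Q1*W⁻¹ + 6*t 1*t 1*t 2*e₃ 1*e₃ 1*e₃ 2*A*A*B2*Q3*W⁻¹ + 3*t 1*t 1*t 1*e₃ 1*A*B2*B2*W⁻¹ + 3*t 1*t 1*t 1*e₃ 1*A*G*B2*Q1*W⁻¹ + (-3)*t 1*t 1*t 1*e₃ 1*A*A*B2*Q3*W⁻¹ + (-3)*t 1*t 1*t 1*e₃ 1*e₃ 2*e₃ 2*A*B2*B2*W⁻¹ + (-3)*t 1*t 1*t 1*e₃ 1*e₃ 2*e₃ 2*A*G*B2*Q1*W⁻¹ + 3*t 1*t 1*t 1*e₃ 1*e₃ 2*e₃ 2*A*A*B2*Q3*W⁻¹ + (-4)*t 1*t 1*t 1*e₃ 1*e₃ 1*e₃ 1*A*B2*B2*W⁻¹ + (-4)*t 1*t 1*t 1*e₃ 1*e₃ 1*e₃ 1*A*G*B2*Q1*W⁻¹ + 4*t 1*t 1*t 1*e₃ 1*e₃ 1*e₃ 1*A*A*B2*Q3*W⁻¹ + 1*t 0*e₃ 0*A*B2*B2*W⁻¹ + (-1)*t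 0*e₃ 0*A*B2*B2*W*W⁻¹*W⁻¹ + 1*t 0*e₃ 0*A*G*G*B1*B1*W⁻¹*W⁻¹ + (-2)*t 0*e₃ 0*A*A*G*B1*B3*W⁻¹*W⁻¹ + 1*t 0*e₃ 0*A*A*A*B3*B3*W⁻¹*W⁻¹ + 1*t 0*e₃ 0*e₃ 2*e₃ 2*A*B2*B2*W⁻¹ + 1*t 0*e₃ 0*e₃ 2*e₃ 2*A*G*B2*Q1*W⁻¹ + (-1)*t 0*e₃ 0*e₃ 2*e₃ 2*A*A*B2*Q3*W⁻¹ + 1*t 0*e₃ 0*e₃ 1*e₃ 1*A*B2*B2*W⁻¹ + 1*t 0*e₃ 0*e₃ 1*e₃ 1*A*G*B2*Q1*W⁻¹ + (-1)*t 0*e₃ 0*e₃ 1*e₃ 1*A*A*B2*Q3*W⁻¹ + (-2)*t 0*t 2*e₃ 0*e₃ 2*G*G*B2*Q1*W⁻¹ + 2*t 0*t 2*e₃ 0*e₃ 2*G*G*B1*Q2*W⁻¹ + (-2)*t 0*t 2*e₃ 0*e₃ 2*A*G*B3*Q2*W⁻¹ + 2*t 0*t 2*e₃ 0*e₃ 2*A*G*B2*Q3*W⁻¹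 + 1*t 0*t 2*t 2*e₃ 0*A*B2*B2*W⁻¹ + 1*t 0*t 2*t 2*e₃ 0*A*G*B2*Q1*W⁻¹ + (-1)*t 0*t 2*t 2*e₃ 0*A*A*B2*Q3*W⁻¹ + (-4)*t 0*t 2*t 2*e₃ 0*e₃ 2*e₃ 2*A*B2*B2*W⁻¹ + (-4)*t 0*t 2*t 2*e₃ 0*e₃ 2*e₃ 2*A*G*B2*Q1*W⁻¹ + 4*t 0*t 2*t 2*e₃ 0*e₃ 2*e₃ 2*A*A*B2*Q3*W⁻¹ + (-1)*t 0*t 2*t 2*e₃ 0*e₃ 1*e₃ 1*A*B2*B2*W⁻¹ + (-1)*t 0*t 2*t 2*e₃ 0*e₃ 1*e₃ 1*A*G*B2*Q1*W⁻¹ + 1*t 0*t 2*t 2*e₃ 0*e₃ 1*e₃ 1*A*A*B2*Q3*W⁻¹ + (-2)*t 0*t 1*e₃ 0*e₃ 1*G*G*B2*Q1*W⁻¹ + 2*t 0*t 1*e₃ 0*e₃ 1*G*G*B1*Q2*W⁻¹ + (-2)*t 0*t 1*e₃ 0*e₃ 1*A*G*B3*Q2*W⁻¹ + 2*t 0*t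 1*e₃ 0*e₃ 1*A*G*B2*Q3*W⁻¹ + (-6)*t 0*t 1*t 2*e₃ 0*e₃ 1*e₃ 2*A*B2*B2*W⁻¹ + (-6)*t 0*t 1*t 2*e₃ 0*e₃ 1*e₃ 2*A*G*B2*Q1*W⁻¹ + 6*t 0*t 1*t 2*e₃ 0*e₃ 1*e₃ 2*A*A*B2*Q3*W⁻¹ + 1*t 0*t 1*t 1*e₃ 0*A*B2*B2*W⁻¹ + 1*t 0*t 1*t 1*e₃ 0*A*G*B2*Q1*W⁻¹ + (-1)*t 0*t 1*t 1*e₃ 0*A*A*B2*Q3*W⁻¹ + (-1)*t 0*t 1*t 1*e₃ 0*e₃ 2*e₃ 2*A*B2*B2*W⁻¹ + (-1)*t 0*t 1*t 1*e₃ 0*e₃ 2*e₃ 2*A*G*B2*Q1*W⁻¹ + 1*t 0*t 1*t 1*e₃ 0*e₃ 2*e₃ 2*A*A*B2*Q3*W⁻¹ + (-4)*t 0*t 1*t 1*e₃ 0*e₃ 1*e₃ 1*A*B2*B2*W⁻¹ + (-4)*t 0*t 1*t 1*e₃ 0*e₃ 1*e₃ 1*A*G*B2*Q1*W⁻¹ +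 4*t 0*t 1*t 1*e₃ 0*e₃ 1*e₃ 1*A*A*B2*Q3*W⁻¹) * hte +
      ((-1)*A*B3*B3*W⁻¹*W⁻¹ + (-1)*A*B1*B1*W⁻¹*W⁻¹) * ha +
      ((-1)*A*W*W⁻¹*W⁻¹) * hb +
      (1*A*G*B3*W⁻¹*W⁻¹ + 1*A*A*B1*W⁻¹*W⁻¹) * hab +
      ((-1)*A*G*B1*W⁻¹ + 1*A*A*B3*W⁻¹) * hQN +
      ((-1)*A + (-1)*A*W*W⁻¹ + 1*A*B2*B2*W⁻¹) * hWW
  refine ⟨key, fun h => ?_⟩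
  field_simp
  linear_combination key

end
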